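/- With $\hat{\eta} = \frac{r_0}{r-r_0}\cdot\frac{p}{q} > \eta^* > 0$: if the number of eliminated variables $m$ (a natural number, $m \le r_0$) satisfies $m < (1 - \frac{\eta^*}{\hat{\eta}})\, r_0$, then for every choice of $m_0 \le m$ surrogate variables among the eliminated (with $r - r_0 - (m - m_0) > 0$), the new estimated FDR $\hat{\eta}^{new} = \frac{r_0 - m_0}{r - r_0 - (m - m_0)}\cdot\frac{p}{q}$ is strictly greater than $\eta^*$. -/
import Mathlib


/-- If `m < (1 - η*/η̂) r0`, then for every choice of `m0 ≤ m` surrogate variables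
among the eliminated, the new estimated FDR exceeds the cutoff `η*`. -/
theorem stmt_1 (p q ηs : ℝ) (hp : 0 < p) (hq : 0 < q) (hηs : 0 < ηs)
    (r r0 m : ℕ) (hr0 : 0 < r0) (hrr0 : r0 < r) (hm : m ≤ r0)
    (hη : ηs < (r0 : ℝ) * (p / q) / ((r : ℝ) - r0))
    (hstep : (m : ℝ) < (1 - ηs / ((r0 : ℝ) * (p / q) / ((r : ℝ) - r0))) * r0) :
    ∀ m0 : ℕ, m0 ≤ m → (0 : ℝ) < (r : ℝ) - r0 - ((m : ℝ) - m0) →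
      ηs < ((r0 : ℝ) - m0) * (p / q) / ((r : ℝ) - r0 - ((m : ℝ) - m0)) := by
  intro m0 hm0 hD
  have hc : (0:ℝ) < p / q := div_pos hp hq
  have hR : (0:ℝ) < (r:ℝ) - r0 := by
    have : (r0:ℝ) < r := by exact_mod_cast hrr0
    linarith
  have hr0' : (0:ℝ) < (r0:ℝ) := by exact_mod_cast hr0
  have hm0' : (m0:ℝ) ≤ (m:ℝ) := by exact_mod_cast hm0
  have key : (m:ℝ) * (p/q) + ηs * ((r:ℝ) - r0) < (r0:ℝ) * (p/q) := by
    have hdiv : ηs / ((r0 : ℝ) * (p / q) / ((r : ℝ) - r0))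
        = ηs * ((r:ℝ) - r0) / ((r0:ℝ) * (p/q)) := by
      field_simp
    rw [hdiv] at hstep
    have h2 := mul_lt_mul_of_pos_right hstep hc
    rw [sub_mul, one_mul] at hstep
    have hpos : (0:ℝ) < (r0:ℝ) * (p/q) := by positivity
    have h3 : ηs * ((r:ℝ) - r0) / ((r0:ℝ) * (p/q)) * r0 * (p/q) = ηs * ((r:ℝ) - r0) := by
      field_simp
    nlinarith [mul_lt_mul_of_pos_right hstep hc]
  rw [lt_div_iff₀ hD]
  nlinarith [mul_le_mul_of_nonneg_right hm0' hc.le, mul_le_mul_of_nonneg_left hm0' hηs.le]
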